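/- Let G be a finite connected simple graph, let u be a vertex of G of degree 2 with distinct neighbors v and w that are not adjacent in G, and let G' be obtained from G by smoothing at u, that is, by deleting u (together with the edges vu and uw) and adding the edge vw. Then scw(G') ≤ scw(G). -/

import Mathlib

open SimpleGraph

universe u

variable {V : Type u}

/-- A tree-cut decomposition of a finite simple graph `G`: a finite tree `T`
on a node type `B`, together with pairwise disjoint (possibly empty) bags
`bag b ⊆ V` whose union is all of `V`. -/
structure TreeCutDecomp [Finite V] (G : SimpleGraph V) where
  B : Type
  finB : Finite B
  T : SimpleGraph B
  isTree : T.IsTree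
  bag : B → Set V
  disj : Pairwise fun b d => Disjoint (bag b) (bag d)
  covers : ∀ v : V, ∃ b, v ∈ bag b

namespace TreeCutDecomp

variable [Finite V] {G : SimpleGraph V}

/-- The adhesion of a link `l` of `T`: the set of edges of `G` whose endpoints lie in
bags indexed by nodes in different components of `T - l` (equivalently, nodes such that
every walk between them uses `l`). -/
def linkAdh (D : TreeCutDecomp G) (l : Sym2 D.B) : Set (Sym2 V) :=
  {e | e ∈ G.edgeSet ∧ ∃ v w : V, ∃ b d : D.B, e = s(v, w) ∧ v ∈ D.bag b ∧ w ∈ D.bag d ∧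
    ∀ p : D.T.Walk b d, l ∈ p.edges}

/-- The adhesion of a node `n` of `T`: the set of edges of `G` whose endpoints lie in
bags indexed by nodes in different components of `T - n` (equivalently, nodes distinct
from `n` such that every walk between them passes through `n`). -/
def nodeAdh (D : TreeCutDecomp G) (n : D.B) : Set (Sym2 V) :=
  {e | e ∈ G.edgeSet ∧ ∃ v w : V, ∃ b d : D.B, e = s(v, w) ∧ v ∈ D.bag b ∧ w ∈ D.bag d ∧
    b ≠ n ∧ d ≠ n ∧ ∀ p : D.T.Walk b d, n ∈ p.support}

/-- The width of a tree-cut decomposition: the maximum of `|adh(l)|` over links `l` of `T`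
and of `|X_b| + |adh(b)|` over nodes `b` of `T`. -/
noncomputable def width (D : TreeCutDecomp G) : ℕ :=
  sSup ({n | ∃ l ∈ D.T.edgeSet, n = (D.linkAdh l).ncard} ∪
        {n | ∃ b : D.B, n = (D.bag b).ncard + (D.nodeAdh b).ncard})

end TreeCutDecomp

/-- The screewidth of `G`: the minimum width of a tree-cut decomposition of `G`. -/
noncomputable def screewidth [Finite V] (G : SimpleGraph V) : ℕ :=
  sInf {n | ∃ D : TreeCutDecomp G, D.width = n}

/-- The graph obtained from `G` by smoothing at the vertex `u` with neighbors `v` and `w`: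
delete `u` (together with its incident edges) and add the edge `vw`. -/
def smoothAt (G : SimpleGraph V) (u v w : V) : SimpleGraph {x : V // x ≠ u} :=
  SimpleGraph.fromRel fun a b =>
    G.Adj a.1 b.1 ∨ ((a.1 = v ∧ b.1 = w))

/-!
Keep the tree of an optimal decomposition of `G` and delete `u` from its bag. Every edge of
the smoothed graph other than `vw` is an edge of `G` crossing the same links and nodes. If `vw`
crosses a link `l`, or a node `n` whose bag does not contain `u`, then the node holding `u` lies
on one side of that separation, so `vu` or `uw` crosses it as well; that edge is gone, so `vw`
takes its place in the count. If `u` lies in the bag at `n`, the one extra edge `vw` in `adh(n)`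
is paid for by the removal of `u` from that bag.
-/

theorem Set.ncard_le_ncard_of_subset_insert {α : Type*} {s t : Set α} {a : α}
    (hst : s ⊆ insert a t) (ha : a ∈ s → ∃ b ∈ t, b ∉ s) (ht : t.Finite) :
    s.ncard ≤ t.ncard := by
  by_cases has : a ∈ s
  · obtain ⟨b, hbt, hbs⟩ := ha has
    have hsub : s ⊆ insert a (t \ {b}) := fun x hx =>
      (hst hx).imp_right fun hxt => ⟨hxt, fun hxb => hbs (hxb ▸ hx)⟩
    calc s.ncard ≤ (insert a (t \ {b})).ncard := Set.ncard_le_ncard hsub (ht.sdiff.insert a)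
      _ ≤ (t \ {b}).ncard + 1 := Set.ncard_insert_le _ _
      _ = t.ncard := Set.ncard_sdiff_singleton_add_one hbt ht
  · exact Set.ncard_le_ncard
      (fun x hx => (hst hx).resolve_left (ne_of_mem_of_not_mem hx has)) ht

namespace SimpleGraph

section WalkSeparation

variable {B : Type*} {T : SimpleGraph B} {b d : B}

theorem forall_walk_mem_edges_symm {l : Sym2 B} (h : ∀ p : T.Walk b d, l ∈ p.edges) :
    ∀ p : T.Walk d b, l ∈ p.edges := fun p => by
  simpa using h p.reverse

theorem forall_walk_mem_edges_or (m : B) {l : Sym2 B} (h : ∀ p : T.Walk b d, l ∈ p.edges) :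
    (∀ p : T.Walk b m, l ∈ p.edges) ∨ ∀ p : T.Walk m d, l ∈ p.edges := by
  by_contra! ⟨⟨p, hp⟩, q, hq⟩
  simpa [hp, hq] using h (p.append q)

theorem forall_walk_mem_support_symm {n : B} (h : ∀ p : T.Walk b d, n ∈ p.support) :
    ∀ p : T.Walk d b, n ∈ p.support := fun p => by
  simpa using h p.reverse

theorem forall_walk_mem_support_or (m : B) {n : B} (h : ∀ p : T.Walk b d, n ∈ p.support) :
    (∀ p : T.Walk b m, n ∈ p.support) ∨ ∀ p : T.Walk m d, n ∈ p.support := by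
  by_contra! ⟨⟨p, hp⟩, q, hq⟩
  simpa [Walk.mem_support_append_iff, hp, hq] using h (p.append q)

end WalkSeparation

variable {B : Type*}

/-- `D.linkAdh l` and `D.nodeAdh n` are definitionally `G.crossingEdges D.bag R`, for `R b d`
saying that `l`, resp. `n`, separates `b` from `d` in the tree. -/
def crossingEdges (G : SimpleGraph V) (bag : B → Set V) (R : B → B → Prop) : Set (Sym2 V) :=
  {e | e ∈ G.edgeSet ∧ ∃ x y : V, ∃ b d : B, e = s(x, y) ∧ x ∈ bag b ∧ y ∈ bag d ∧ R b d}

variable {G : SimpleGraph V} {u v w : V}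

theorem adj_of_smoothAt_adj {a c : {x : V // x ≠ u}} (h : (smoothAt G u v w).Adj a c)
    (hne : s(a.1, c.1) ≠ s(v, w)) : G.Adj a c := by
  obtain ⟨-, (h | ⟨rfl, rfl⟩) | (h | ⟨rfl, rfl⟩)⟩ := (fromRel_adj _ _ _).1 h
  · exact h
  · exact absurd rfl hne
  · exact h.symm
  · exact absurd Sym2.eq_swap hne

variable {bag : B → Set V} {R : B → B → Prop}

theorem map_val_mem_crossingEdges_smoothAt {e : Sym2 {x : V // x ≠ u}}
    (he : e ∈ (smoothAt G u v w).crossingEdges (fun b => Subtype.val ⁻¹' bag b) R) :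
    e.map Subtype.val = s(v, w) ∨ e.map Subtype.val ∈ G.crossingEdges bag R := by
  obtain ⟨hadj, a, c, b, d, rfl, ha, hc, hR⟩ := he
  rw [Sym2.map_mk]
  by_cases hvw : s(a.1, c.1) = s(v, w)
  · exact Or.inl hvw
  · exact Or.inr ⟨adj_of_smoothAt_adj hadj hvw, a, c, b, d, rfl, ha, hc, hR⟩

theorem crossingEdges_of_map_val_eq {bu : B} (hv : G.Adj u v) (hw : G.Adj u w)
    (hbu : u ∈ bag bu) (hsymm : ∀ b d, R b d → R d b)
    (hsplit : ∀ b d, R b d → R b bu ∨ R bu d) {e : Sym2 {x : V // x ≠ u}}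
    (he : e ∈ (smoothAt G u v w).crossingEdges (fun b => Subtype.val ⁻¹' bag b) R)
    (hvw : e.map Subtype.val = s(v, w)) :
    s(v, u) ∈ G.crossingEdges bag R ∨ s(u, w) ∈ G.crossingEdges bag R := by
  have charge : ∀ b d, v ∈ bag b → w ∈ bag d → R b d →
      s(v, u) ∈ G.crossingEdges bag R ∨ s(u, w) ∈ G.crossingEdges bag R :=
    fun b d hb hd hR =>
    (hsplit b d hR).imp (fun h => ⟨hv.symm, v, u, b, bu, rfl, hb, hbu, h⟩)
      (fun h => ⟨hw, u, w, bu, d, rfl, hbu, hd, h⟩)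
  obtain ⟨-, a, c, b, d, rfl, ha, hc, hR⟩ := he
  rcases Sym2.eq_iff.1 hvw with ⟨rfl, rfl⟩ | ⟨rfl, rfl⟩
  · exact charge b d ha hc hR
  · exact charge d b hc ha (hsymm b d hR)

variable [Finite V]

theorem ncard_crossingEdges_smoothAt_le {bu : B} (hv : G.Adj u v) (hw : G.Adj u w)
    (hbu : u ∈ bag bu) (hsymm : ∀ b d, R b d → R d b)
    (hsplit : ∀ b d, R b d → R b bu ∨ R bu d) :
    ((smoothAt G u v w).crossingEdges (fun b => Subtype.val ⁻¹' bag b) R).ncard ≤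
      (G.crossingEdges bag R).ncard := by
  set E := (smoothAt G u v w).crossingEdges (fun b => Subtype.val ⁻¹' bag b) R
  have hu : ∀ e' ∈ Sym2.map Subtype.val '' E, u ∉ e' := by
    rintro _ ⟨e, -, rfl⟩ hue
    obtain ⟨a, -, hau⟩ := Sym2.mem_map.1 hue
    exact a.2 hau
  rw [← Set.ncard_image_of_injective E (Sym2.map.injective Subtype.val_injective)]
  refine Set.ncard_le_ncard_of_subset_insert (a := s(v, w))
    (fun _ ⟨e, he, hee⟩ => hee ▸ map_val_mem_crossingEdges_smoothAt he) ?_ (Set.toFinite _)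
  rintro ⟨e, he, hvw⟩
  rcases crossingEdges_of_map_val_eq hv hw hbu hsymm hsplit he hvw with h | h
  · exact ⟨_, h, fun h' => hu _ h' (Sym2.mem_mk_right v u)⟩
  · exact ⟨_, h, fun h' => hu _ h' (Sym2.mem_mk_left u w)⟩

theorem ncard_crossingEdges_smoothAt_le_succ :
    ((smoothAt G u v w).crossingEdges (fun b => Subtype.val ⁻¹' bag b) R).ncard ≤
      (G.crossingEdges bag R).ncard + 1 := by
  set E := (smoothAt G u v w).crossingEdges (fun b => Subtype.val ⁻¹' bag b) R
  have hsub : Sym2.map Subtype.val '' E ⊆ insert s(v, w) (G.crossingEdges bag R) :=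
    fun _ ⟨e, he, hee⟩ => hee ▸ map_val_mem_crossingEdges_smoothAt he
  rw [← Set.ncard_image_of_injective E (Sym2.map.injective Subtype.val_injective)]
  exact (Set.ncard_le_ncard hsub).trans (Set.ncard_insert_le _ _)

end SimpleGraph

namespace TreeCutDecomp

variable [Finite V] {G : SimpleGraph V}

theorem bddAbove_widths (D : TreeCutDecomp G) :
    BddAbove ({n | ∃ l ∈ D.T.edgeSet, n = (D.linkAdh l).ncard} ∪
      {n | ∃ b : D.B, n = (D.bag b).ncard + (D.nodeAdh b).ncard}) := by
  refine ⟨Nat.card V + Nat.card (Sym2 V), ?_⟩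
  rintro _ (⟨l, -, rfl⟩ | ⟨b, rfl⟩)
  · exact (Set.ncard_le_card _).trans (Nat.le_add_left _ _)
  · exact Nat.add_le_add (Set.ncard_le_card _) (Set.ncard_le_card _)

theorem ncard_linkAdh_le_width (D : TreeCutDecomp G) {l : Sym2 D.B} (hl : l ∈ D.T.edgeSet) :
    (D.linkAdh l).ncard ≤ D.width :=
  le_csSup D.bddAbove_widths (Or.inl ⟨l, hl, rfl⟩)

theorem ncard_bag_add_ncard_nodeAdh_le_width (D : TreeCutDecomp G) (b : D.B) :
    (D.bag b).ncard + (D.nodeAdh b).ncard ≤ D.width :=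
  le_csSup D.bddAbove_widths (Or.inr ⟨b, rfl⟩)

theorem width_le {D : TreeCutDecomp G} {k : ℕ}
    (hlink : ∀ l ∈ D.T.edgeSet, (D.linkAdh l).ncard ≤ k)
    (hnode : ∀ b, (D.bag b).ncard + (D.nodeAdh b).ncard ≤ k) : D.width ≤ k :=
  csSup_le' <| by
    rintro _ (⟨l, hl, rfl⟩ | ⟨b, rfl⟩)
    exacts [hlink l hl, hnode b]

def singleNode (G : SimpleGraph V) : TreeCutDecomp G where
  B := Unit
  finB := inferInstance
  T := ⊥
  isTree := IsTree.of_subsingleton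
  bag _ := Set.univ
  disj a b hab := absurd (Subsingleton.elim a b) hab
  covers _ := ⟨(), Set.mem_univ _⟩

theorem exists_width_eq_screewidth (G : SimpleGraph V) :
    ∃ D : TreeCutDecomp G, D.width = screewidth G :=
  Nat.sInf_mem (s := {n | ∃ D : TreeCutDecomp G, D.width = n}) ⟨_, singleNode G, rfl⟩

theorem screewidth_le_width (D : TreeCutDecomp G) : screewidth G ≤ D.width :=
  Nat.sInf_le ⟨D, rfl⟩

def smooth (u v w : V) (D : TreeCutDecomp G) : TreeCutDecomp (smoothAt G u v w) where
  B := D.B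
  finB := D.finB
  T := D.T
  isTree := D.isTree
  bag b := Subtype.val ⁻¹' D.bag b
  disj _ _ hab := (D.disj hab).preimage _
  covers x := D.covers x.1

variable {u v w : V}

theorem ncard_linkAdh_smooth_le (hv : G.Adj u v) (hw : G.Adj u w) (D : TreeCutDecomp G)
    (l : Sym2 D.B) : ((D.smooth u v w).linkAdh l).ncard ≤ (D.linkAdh l).ncard := by
  obtain ⟨bu, hbu⟩ := D.covers u
  exact ncard_crossingEdges_smoothAt_le hv hw hbu (fun _ _ => forall_walk_mem_edges_symm)
    (fun _ _ => forall_walk_mem_edges_or bu)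

theorem ncard_nodeAdh_smooth_le_of_notMem (hv : G.Adj u v) (hw : G.Adj u w)
    (D : TreeCutDecomp G) {n : D.B} (hu : u ∉ D.bag n) :
    ((D.smooth u v w).nodeAdh n).ncard ≤ (D.nodeAdh n).ncard := by
  obtain ⟨bu, hbu⟩ := D.covers u
  have hbun : bu ≠ n := by rintro rfl; exact hu hbu
  refine ncard_crossingEdges_smoothAt_le hv hw hbu
    (fun _ _ ⟨hb, hd, h⟩ => ⟨hd, hb, forall_walk_mem_support_symm h⟩) ?_
  rintro b d ⟨hb, hd, h⟩
  exact (forall_walk_mem_support_or bu h).imp (fun h => ⟨hb, hbun, h⟩)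
    fun h => ⟨hbun, hd, h⟩

theorem ncard_bag_smooth_add_one (D : TreeCutDecomp G) {n : D.B} (hu : u ∈ D.bag n) :
    ((D.smooth u v w).bag n).ncard + 1 = (D.bag n).ncard := by
  have hpre : ((D.smooth u v w).bag n) = Subtype.val ⁻¹' (D.bag n \ {u}) := by
    ext x
    simp [smooth, x.2]
  rw [hpre, Set.ncard_preimage_of_injective_subset_range Subtype.val_injective
    fun x hx => ⟨⟨x, hx.2⟩, rfl⟩, Set.ncard_sdiff_singleton_add_one hu]

theorem ncard_bag_smooth_le (D : TreeCutDecomp G) (n : D.B) :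
    ((D.smooth u v w).bag n).ncard ≤ (D.bag n).ncard :=
  Set.ncard_le_ncard_of_injOn Subtype.val (fun _ h => h) Subtype.val_injective.injOn

theorem width_smooth_le (hv : G.Adj u v) (hw : G.Adj u w) (D : TreeCutDecomp G) :
    (D.smooth u v w).width ≤ D.width := by
  refine width_le (fun l hl => (ncard_linkAdh_smooth_le hv hw D l).trans
    (D.ncard_linkAdh_le_width hl)) fun n => ?_
  refine le_trans ?_ (D.ncard_bag_add_ncard_nodeAdh_le_width n)
  by_cases hu : u ∈ D.bag n
  · have hbag := D.ncard_bag_smooth_add_one (v := v) (w := w) hu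
    have hadh : ((D.smooth u v w).nodeAdh n).ncard ≤ (D.nodeAdh n).ncard + 1 :=
      ncard_crossingEdges_smoothAt_le_succ
    omega
  · exact Nat.add_le_add (D.ncard_bag_smooth_le n)
      (D.ncard_nodeAdh_smooth_le_of_notMem hv hw hu)

end TreeCutDecomp

theorem screewidth_smooth_le_general [Finite V] (G : SimpleGraph V) (u v w : V)
    (hnbrs : {x : V | G.Adj u x} = {v, w}) :
    screewidth (smoothAt G u v w) ≤ screewidth G := by
  have hv : G.Adj u v := show v ∈ {x | G.Adj u x} by rw [hnbrs]; exact .inl rfl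
  have hw : G.Adj u w := show w ∈ {x | G.Adj u x} by rw [hnbrs]; exact .inr rfl
  obtain ⟨D, hD⟩ := TreeCutDecomp.exists_width_eq_screewidth G
  calc screewidth (smoothAt G u v w)
      ≤ (D.smooth u v w).width := (D.smooth u v w).screewidth_le_width
    _ ≤ D.width := D.width_smooth_le hv hw
    _ = screewidth G := hD

/-- If `u` is a `2`-valent vertex of a finite connected simple graph `G` with distinct,
nonadjacent neighbors `v` and `w`, then smoothing at `u` does not increase screewidth. -/
theorem screewidth_smooth_le [Finite V] (G : SimpleGraph V) (hG : G.Connected)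
    (u v w : V) (hvw : v ≠ w) (hnadj : ¬ G.Adj v w)
    (hnbrs : {x : V | G.Adj u x} = {v, w}) :
    screewidth (smoothAt G u v w) ≤ screewidth G :=
  screewidth_smooth_le_general G u v w hnbrs
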